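/- arXiv:1705.04553 — 4 statements merged into one kernel-verified Lean document; each statement's English description precedes it below -/
import Mathlib

section
/- If every point of a measure space X belongs to at most N of the measurable sets (U_k)_{k∈ℕ}, then there exists a decomposition U_k = A_k^1 ∪ ⋯ ∪ A_k^N into measurable sets such that for each fixed i ∈ {1,…,N}, the sets (A_k^i)_{k∈ℕ} are pairwise disjoint. -/
/-!
Number the sets containing a point `x` in the order of their indices: the piece `A k i` of `U k`
consists of the points of `U k` lying in exactly `i` of the earlier sets `U 0, …, U (k - 1)`.
If `x ∈ U k ∩ U l` with `k < l`, then `U k` itself is one of the earlier sets counted at `l`,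
so the two counts differ and the `i`-th pieces are disjoint. The count at `k` for `x ∈ U k` is
smaller than the total number of sets containing `x`, hence smaller than `N`.
-/

theorem Nat.count_le_encard (p : ℕ → Prop) [DecidablePred p] (n : ℕ) :
    (Nat.count p n : ℕ∞) ≤ {j | p j}.encard := by
  rw [Nat.count_eq_card_filter_range, ← Set.encard_coe_eq_coe_finsetCard]
  exact Set.encard_le_encard fun j hj => (Finset.mem_filter.mp hj).2

theorem Nat.count_lt_of_encard_le {p : ℕ → Prop} [DecidablePred p] {N k : ℕ} (hk : p k)
    (hN : {j | p j}.encard ≤ N) : Nat.count p k < N := by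
  have hsucc : Nat.count p k < Nat.count p (k + 1) := Nat.count_lt_count_succ_iff.mpr hk
  exact_mod_cast hsucc.trans_le (by exact_mod_cast (Nat.count_le_encard p (k + 1)).trans hN)

section

variable {X : Type*}

open scoped Classical in
noncomputable def priorCount (U : ℕ → Set X) (k : ℕ) (x : X) : ℕ :=
  Nat.count (fun j => x ∈ U j) k

def countLayer (U : ℕ → Set X) (k i : ℕ) : Set X :=
  {x ∈ U k | priorCount U k x = i}

theorem priorCount_zero (U : ℕ → Set X) : priorCount U 0 = 0 := by
  classical
  exact funext fun _ => Nat.count_zero _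

open scoped Classical in
theorem priorCount_succ (U : ℕ → Set X) (k : ℕ) (x : X) :
    priorCount U (k + 1) x = priorCount U k x + if x ∈ U k then 1 else 0 :=
  Nat.count_succ _ _

theorem measurable_priorCount [MeasurableSpace X] {U : ℕ → Set X} (hU : ∀ k, MeasurableSet (U k))
    (k : ℕ) : Measurable (priorCount U k) := by
  classical
  induction k with
  | zero => rw [priorCount_zero]; exact measurable_const
  | succ k ih =>
    rw [funext (priorCount_succ U k)]
    exact ih.add (Measurable.ite (hU k) measurable_const measurable_const)

theorem measurableSet_countLayer [MeasurableSpace X] {U : ℕ → Set X}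
    (hU : ∀ k, MeasurableSet (U k)) (k i : ℕ) : MeasurableSet (countLayer U k i) :=
  (hU k).inter (measurable_priorCount hU k (measurableSet_singleton i))

theorem priorCount_lt {U : ℕ → Set X} {N k : ℕ} {x : X} (hx : x ∈ U k)
    (hN : {j | x ∈ U j}.encard ≤ N) : priorCount U k x < N := by
  classical
  exact Nat.count_lt_of_encard_le hx hN

theorem iUnion_countLayer {U : ℕ → Set X} {N : ℕ} (hN : ∀ x, {j | x ∈ U j}.encard ≤ N) (k : ℕ) :
    ⋃ i : Fin N, countLayer U k i = U k := by
  ext x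
  simp only [Set.mem_iUnion, countLayer, Set.mem_ofPred_eq]
  exact ⟨fun ⟨_, hx, _⟩ => hx, fun hx => ⟨⟨_, priorCount_lt hx (hN x)⟩, hx, rfl⟩⟩

theorem pairwise_disjoint_countLayer (U : ℕ → Set X) (i : ℕ) :
    Pairwise (Function.onFun Disjoint fun k => countLayer U k i) := by
  refine (pairwise_disjoint_on _).2 fun k l hkl => Set.disjoint_left.mpr ?_
  rintro x ⟨hxk, hk⟩ ⟨-, hl⟩
  classical
  exact (Nat.count_strict_mono (p := fun j => x ∈ U j) hxk hkl).ne (hk.trans hl.symm)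

end

/-- Decomposition lemma: if every point of `X` belongs to at most `N` of the
measurable sets `U k`, there is a decomposition `U k = A k 1 ∪ ⋯ ∪ A k N` into
measurable sets such that for each fixed `i`, the sets `(A k i)_k` are pairwise
disjoint. -/
theorem stmt2 {X : Type*} [MeasurableSpace X] (N : ℕ) (U : ℕ → Set X)
    (hU : ∀ k, MeasurableSet (U k))
    (hN : ∀ x, Set.encard {k | x ∈ U k} ≤ N) :
    ∃ A : ℕ → Fin N → Set X,
      (∀ k i, MeasurableSet (A k i)) ∧
      (∀ k, U k = ⋃ i, A k i) ∧
      (∀ i, Pairwise (Function.onFun Disjoint fun k => A k i)) :=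
  ⟨fun k i => countLayer U k i, fun k i => measurableSet_countLayer hU k i,
    fun k => (iUnion_countLayer hN k).symm, fun i => pairwise_disjoint_countLayer U i⟩
end

section
/- Let X be a Banach space, A ∈ L(X), and suppose there exist a net of operators (B_γ) with sup_γ ‖B_γ‖ ≤ M and a net of compact operators (K_γ) such that ‖B_γ A − (I + K_γ)‖ → 0. Then A is left-invertible modulo compact operators, i.e., there exists B ∈ L(X) with BA − I compact, and the coset B + K(X) can be chosen with ‖B + K(X)‖ ≤ 2M. -/
open Filter

/-- Neumann-series argument from Proposition 4.3: if there are a net of operators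
`B γ` with `‖B γ‖ ≤ M` and compact operators `K γ` with `‖B γ A − (I + K γ)‖ → 0`,
then `A` is left-invertible modulo compacts, with the inverting coset of
Calkin-algebra norm at most `2M`. -/
theorem stmt5 {X ι : Type*} [NormedAddCommGroup X] [NormedSpace ℝ X] [CompleteSpace X]
    (l : Filter ι) [l.NeBot] (A : X →L[ℝ] X) (B K : ι → X →L[ℝ] X) (M : ℝ)
    (hB : ∀ γ, ‖B γ‖ ≤ M) (hK : ∀ γ, IsCompactOperator ⇑(K γ))
    (h : Tendsto (fun γ => ‖B γ ∘L A - (1 + K γ)‖) l (nhds 0)) :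
    ∃ B' : X →L[ℝ] X, IsCompactOperator ⇑(B' ∘L A - 1) ∧
      sInf {r : ℝ | ∃ C : X →L[ℝ] X, IsCompactOperator ⇑C ∧ r = ‖B' - C‖} ≤ 2 * M := by
  -- pick γ with small error
  obtain ⟨γ, hγ⟩ : ∃ γ, ‖B γ ∘L A - (1 + K γ)‖ < 1 / 2 :=
    (h.eventually (gt_mem_nhds (by norm_num : (0:ℝ) < 1 / 2))).exists
  set T : X →L[ℝ] X := B γ ∘L A - (1 + K γ) with hT
  have hTnorm : ‖(-T)‖ < 1 := by rw [norm_neg]; linarith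
  set V : X →L[ℝ] X := ∑' n : ℕ, (-T) ^ n with hV
  have hVinv : V * (1 + T) = 1 := by
    have := geom_series_mul_neg (-T) hTnorm
    simpa [sub_neg_eq_add] using this
  have hVnorm : ‖V‖ ≤ 2 := by
    have h1 : ‖(1 : X →L[ℝ] X)‖ ≤ 1 := ContinuousLinearMap.norm_id_le
    have h2 := tsum_geometric_le_of_norm_lt_one (-T) hTnorm
    have h3 : (1 - ‖(-T)‖)⁻¹ ≤ 2 := by
      rw [norm_neg]
      rw [inv_le_comm₀ (by rw [norm_neg] at hTnorm; linarith) (by norm_num)]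
      linarith
    calc ‖V‖ ≤ ‖(1 : X →L[ℝ] X)‖ - 1 + (1 - ‖(-T)‖)⁻¹ := h2
      _ ≤ 2 := by linarith
  refine ⟨V ∘L B γ, ?_, ?_⟩
  · -- V ∘L B γ ∘L A - 1 = V ∘L K γ
    have key : (V ∘L B γ) ∘L A - 1 = V ∘L K γ := by
      have : B γ ∘L A = 1 + T + K γ := by rw [hT]; abel
      calc (V ∘L B γ) ∘L A - 1 = V * (B γ ∘L A) - 1 := rfl
        _ = V * (1 + T) + V * K γ - 1 := by rw [this, mul_add]
        _ = V ∘L K γ := by rw [hVinv]; abel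
    rw [key]
    exact (hK γ).clm_comp V
  · have hmem : ‖V ∘L B γ - 0‖ ∈
        {r : ℝ | ∃ C : X →L[ℝ] X, IsCompactOperator ⇑C ∧ r = ‖V ∘L B γ - C‖} :=
      ⟨0, by simpa using isCompactOperator_zero, rfl⟩
    have hbdd : BddBelow {r : ℝ | ∃ C : X →L[ℝ] X, IsCompactOperator ⇑C ∧ r = ‖V ∘L B γ - C‖} :=
      ⟨0, fun r ⟨C, _, hr⟩ => hr ▸ norm_nonneg _⟩
    calc sInf _ ≤ ‖V ∘L B γ - 0‖ := csInf_le hbdd hmem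
      _ = ‖V ∘L B γ‖ := by rw [sub_zero]
      _ ≤ ‖V‖ * ‖B γ‖ := ContinuousLinearMap.opNorm_comp_le _ _
      _ ≤ 2 * M := by
          have hM : 0 ≤ M := le_trans (norm_nonneg _) (hB γ)
          exact mul_le_mul hVnorm (hB γ) (norm_nonneg _) (by norm_num)
end

section
/- Let (φ_j)_{j∈ℕ} be a family of functions φ_j : Ω → [0,1] on a metric measure space Ω such that ∑_j φ_j = 1 pointwise and every point of Ω lies in the support of at most N of the φ_j. Let (A_j) be uniformly bounded operators on L^p and (a_j), (b_j) functions Ω → [0,1] whose supports have covering multiplicity at most N. Then the series ∑_j M_{a_j} A_j M_{b_j} converges strongly, ‖∑_j M_{a_j} A_j M_{b_j}‖ ≤ N² sup_j ‖A_j‖, and ∑_j ‖M_{a_j} A_j M_{b_j} f‖^p ≤ N (sup_j ‖A_j‖)^p ‖f‖^p for all f ∈ L^p. -/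
/-!
At every point at most `N` of the `a j` and at most `N` of the `b j` are nonzero. Pointwise this
gives `∑ⱼ |bⱼ f|^p ≤ N |f|^p`, hence `∑ⱼ ‖M_{bⱼ} f‖^p ≤ N ‖f‖^p`, and (convexity of `t ↦ t^p` on
the at most `N` nonzero terms) `|∑ⱼ aⱼ gⱼ|^p ≤ N^{p-1} ∑ⱼ |aⱼ gⱼ|^p`, hence
`‖∑_{j ∈ t} M_{aⱼ} gⱼ‖^p ≤ N^{p-1} ∑_{j ∈ t} ‖gⱼ‖^p` for finite `t`. Taking `gⱼ = Aⱼ M_{bⱼ} f`,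
the partial sums of the series are Cauchy, the limit is a bounded operator by Banach–Steinhaus,
and `‖T f‖^p ≤ N^{p-1} · N C^p ‖f‖^p = (N C ‖f‖)^p` with `C = supⱼ ‖Aⱼ‖`.
-/

open MeasureTheory Finset
open scoped NNReal ENNReal

theorem Finset.card_le_of_coe_subset_of_encard_le {ι : Type*} {s : Finset ι} {S : Set ι}
    {N : ℕ} (hs : (s : Set ι) ⊆ S) (hS : S.encard ≤ N) : #s ≤ N := by
  have : ((#s : ℕ) : ℕ∞) ≤ N := by
    rw [← Set.encard_coe_eq_coe_finsetCard]
    exact (Set.encard_mono hs).trans hS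
  exact_mod_cast this

theorem norm_sum_rpow_le_of_encard_ne_zero_le {ι E : Type*} [NormedAddCommGroup E]
    {p : ℝ} (hp : 1 ≤ p) {N : ℕ} (t : Finset ι) {z : ι → E}
    (hN : {j | z j ≠ 0}.encard ≤ N) :
    ‖∑ j ∈ t, z j‖ ^ p ≤ (N : ℝ) ^ (p - 1) * ∑ j ∈ t, ‖z j‖ ^ p := by
  classical
  set s := {j ∈ t | z j ≠ 0}
  have hs : #s ≤ N := card_le_of_coe_subset_of_encard_le (fun j hj => (mem_filter.1 hj).2) hN
  calc ‖∑ j ∈ t, z j‖ ^ p = ‖∑ j ∈ s, z j‖ ^ p := by rw [sum_filter_ne_zero]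
    _ ≤ (∑ j ∈ s, |‖z j‖|) ^ p := by
        simp only [abs_norm]
        gcongr
        exact norm_sum_le _ _
    _ ≤ (#s : ℝ) ^ (p - 1) * ∑ j ∈ s, |‖z j‖| ^ p := Real.rpow_sum_le_const_mul_sum_rpow _ _ hp
    _ ≤ (N : ℝ) ^ (p - 1) * ∑ j ∈ t, ‖z j‖ ^ p := by
        simp only [abs_norm]
        gcongr
        exact filter_subset _ _

theorem sum_norm_rpow_le_of_encard_ne_zero_le {ι : Type*} {p : ℝ} (hp : 0 < p) {N : ℕ}
    (t : Finset ι) {c : ι → ℝ} (hc : ∀ j, ‖c j‖ ≤ 1) (hN : {j | c j ≠ 0}.encard ≤ N) :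
    ∑ j ∈ t, ‖c j‖ ^ p ≤ N := by
  classical
  set s := {j ∈ t | c j ≠ 0}
  have hs : #s ≤ N := card_le_of_coe_subset_of_encard_le (fun j hj => (mem_filter.1 hj).2) hN
  calc ∑ j ∈ t, ‖c j‖ ^ p = ∑ j ∈ s, ‖c j‖ ^ p := by
        refine (sum_filter_of_ne fun j _ h => ?_).symm
        contrapose! h
        simp [h, Real.zero_rpow hp.ne']
    _ ≤ #s • (1 : ℝ) :=
        sum_le_card_nsmul _ _ _ fun j _ => Real.rpow_le_one (norm_nonneg _) (hc j) hp.le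
    _ ≤ N := by simpa using hs

namespace MeasureTheory.Lp

variable {Ω ι E : Type*} [MeasurableSpace Ω] {μ : Measure Ω} [NormedAddCommGroup E]

theorem norm_rpow_eq_integral {p : ℝ≥0} (hp : p ≠ 0) (f : Lp E p μ) :
    ‖f‖ ^ (p : ℝ) = ∫ x, ‖f x‖ ^ (p : ℝ) ∂μ := by
  rw [Lp.norm_def, toReal_eLpNorm (Lp.aestronglyMeasurable f),
    lpNorm_nnreal_eq_integral_norm_rpow hp (Lp.aestronglyMeasurable f),
    ← Real.rpow_mul (integral_nonneg fun x => by positivity),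
    inv_mul_cancel₀ (NNReal.coe_ne_zero.2 hp), Real.rpow_one]

theorem integrable_norm_rpow {p : ℝ≥0} (hp : p ≠ 0) (f : Lp E p μ) :
    Integrable (fun x => ‖f x‖ ^ (p : ℝ)) μ := by
  simpa using (Lp.memLp f).integrable_norm_rpow (by exact_mod_cast hp) ENNReal.coe_ne_top

variable [NormedSpace ℝ E]

theorem norm_le_of_ae_eq_smul {p : ℝ≥0∞} {a : Ω → ℝ} (ha : ∀ x, ‖a x‖ ≤ 1) {f g : Lp E p μ}
    (hg : g =ᵐ[μ] fun x => a x • f x) : ‖g‖ ≤ ‖f‖ := by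
  refine Lp.norm_le_norm_of_ae_le ?_
  filter_upwards [hg] with x hx
  rw [hx, norm_smul]
  exact mul_le_of_le_one_left (norm_nonneg _) (ha x)

variable {p : ℝ≥0} {N : ℕ} {a : ι → Ω → ℝ}
  (haN : ∀ x, {j | a j x ≠ 0}.encard ≤ N)
include haN

theorem sum_norm_rpow_le_of_ae_eq_smul (hp : p ≠ 0) (ha : ∀ j x, ‖a j x‖ ≤ 1)
    {f : Lp E p μ} {G : ι → Lp E p μ} (hG : ∀ j, G j =ᵐ[μ] fun x => a j x • f x) (t : Finset ι) :
    ∑ j ∈ t, ‖G j‖ ^ (p : ℝ) ≤ N * ‖f‖ ^ (p : ℝ) := by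
  have hint := integrable_norm_rpow (μ := μ) (E := E) hp
  simp only [norm_rpow_eq_integral hp]
  rw [← integral_finsetSum _ fun j _ => hint (G j), ← integral_const_mul]
  refine integral_mono_ae (integrable_finsetSum _ fun j _ => hint (G j)) ((hint f).const_mul _) ?_
  filter_upwards [(Filter.eventually_all_finset t).2 fun j _ => hG j] with x hx
  calc ∑ j ∈ t, ‖G j x‖ ^ (p : ℝ) = (∑ j ∈ t, ‖a j x‖ ^ (p : ℝ)) * ‖f x‖ ^ (p : ℝ) := by
        rw [Finset.sum_mul]
        refine Finset.sum_congr rfl fun j hj => ?_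
        rw [hx j hj, norm_smul, Real.mul_rpow (norm_nonneg _) (norm_nonneg _)]
    _ ≤ N * ‖f x‖ ^ (p : ℝ) := by
        gcongr
        exact sum_norm_rpow_le_of_encard_ne_zero_le (NNReal.coe_pos.2 (pos_iff_ne_zero.2 hp)) t
          (ha · x) (haN x)

theorem sum_norm_rpow_apply_le_of_ae_eq_smul [Fact (1 ≤ (p : ℝ≥0∞))] {F : Type*}
    [NormedAddCommGroup F] [NormedSpace ℝ F]
    (ha : ∀ j x, ‖a j x‖ ≤ 1) {C : ℝ} (hC : 0 ≤ C) {A : ι → Lp E p μ →L[ℝ] F}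
    (hA : ∀ j, ‖A j‖ ≤ C) {f : Lp E p μ} {G : ι → Lp E p μ}
    (hG : ∀ j, G j =ᵐ[μ] fun x => a j x • f x) (t : Finset ι) :
    ∑ j ∈ t, ‖A j (G j)‖ ^ (p : ℝ) ≤ N * C ^ (p : ℝ) * ‖f‖ ^ (p : ℝ) :=
  calc ∑ j ∈ t, ‖A j (G j)‖ ^ (p : ℝ) ≤ ∑ j ∈ t, C ^ (p : ℝ) * ‖G j‖ ^ (p : ℝ) :=
        Finset.sum_le_sum fun j _ => by
          rw [← Real.mul_rpow hC (norm_nonneg _)]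
          gcongr
          exact (A j).le_of_opNorm_le (hA j) _
    _ ≤ C ^ (p : ℝ) * (N * ‖f‖ ^ (p : ℝ)) := by
        rw [← Finset.mul_sum]
        gcongr
        exact sum_norm_rpow_le_of_ae_eq_smul haN
          (zero_lt_one.trans_le (ENNReal.one_le_coe_iff.1 Fact.out)).ne' ha hG t
    _ = N * C ^ (p : ℝ) * ‖f‖ ^ (p : ℝ) := by ring

theorem norm_sum_rpow_le_of_ae_eq_smul (hp : 1 ≤ p) {g : ι → Ω → E} {G : ι → Lp E p μ}
    (hG : ∀ j, G j =ᵐ[μ] fun x => a j x • g j x) (t : Finset ι) :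
    ‖∑ j ∈ t, G j‖ ^ (p : ℝ) ≤ (N : ℝ) ^ ((p : ℝ) - 1) * ∑ j ∈ t, ‖G j‖ ^ (p : ℝ) := by
  have hp0 : p ≠ 0 := (zero_lt_one.trans_le hp).ne'
  have hint := integrable_norm_rpow (μ := μ) (E := E) hp0
  have hGt : ∀ᵐ x ∂μ, ∀ j ∈ t, G j x = a j x • g j x :=
    (Filter.eventually_all_finset t).2 fun j _ => hG j
  simp only [norm_rpow_eq_integral hp0]
  rw [← integral_finsetSum _ fun j _ => hint (G j), ← integral_const_mul]
  refine integral_mono_ae (hint _) ((integrable_finsetSum _ fun j _ => hint (G j)).const_mul _) ?_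
  filter_upwards [hGt, coeFn_fun_finsetSum t G] with x hx hsum
  have hsupp : {j | a j x • g j x ≠ 0}.encard ≤ N :=
    (Set.encard_mono fun j hj => left_ne_zero_of_smul hj).trans (haN x)
  rw [hsum, Finset.sum_congr rfl hx,
    Finset.sum_congr rfl fun j hj => congrArg (‖·‖ ^ (p : ℝ)) (hx j hj)]
  exact norm_sum_rpow_le_of_encard_ne_zero_le (by exact_mod_cast hp) t hsupp

end MeasureTheory.Lp

section SeriesOfOperators

variable {ι E : Type*} [NormedAddCommGroup E] {p B : ℝ} {u : ι → E} {w : ι → ℝ}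

theorem summable_of_norm_sum_rpow_le [CompleteSpace E] (hp : 0 < p)
    (h : ∀ t : Finset ι, ‖∑ j ∈ t, u j‖ ^ p ≤ ∑ j ∈ t, w j)
    (hB : ∀ t : Finset ι, ∑ j ∈ t, w j ≤ B) :
    Summable u := by
  have hw : Summable w :=
    summable_of_sum_le (fun j => (Real.rpow_nonneg (norm_nonneg _) p).trans (by simpa using h {j}))
      hB
  rw [summable_iff_vanishing_norm]
  intro ε hε
  obtain ⟨s, hs⟩ := summable_iff_vanishing_norm.1 hw (ε ^ p) (by positivity)
  refine ⟨s, fun t ht => ?_⟩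
  have : ‖∑ j ∈ t, u j‖ ^ p < ε ^ p := (h t).trans_lt ((le_abs_self _).trans_lt (hs t ht))
  exact (Real.rpow_lt_rpow_iff (norm_nonneg _) hε.le hp).1 this

theorem norm_tsum_rpow_le_of_norm_sum_rpow_le (hp : 0 ≤ p) (hu : Summable u)
    (h : ∀ t : Finset ι, ‖∑ j ∈ t, u j‖ ^ p ≤ B) : ‖∑' j, u j‖ ^ p ≤ B :=
  have hcont : Continuous fun x : E => ‖x‖ ^ p := continuous_norm.rpow_const fun _ => Or.inr hp
  le_of_tendsto ((hcont.tendsto _).comp hu.hasSum) (Filter.Eventually.of_forall h)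

theorem ContinuousLinearMap.exists_hasSum_apply_and_opNorm_le {𝕜 F : Type*}
    [NontriviallyNormedField 𝕜] [NormedSpace 𝕜 E] [CompleteSpace E] [NormedAddCommGroup F]
    [NormedSpace 𝕜 F] [CompleteSpace F] [Countable ι] (T : ι → E →L[𝕜] F) (hp : 0 < p) {K : ℝ}
    (hK : 0 ≤ K) (w : E → ι → ℝ)
    (h : ∀ f (t : Finset ι), ‖∑ j ∈ t, T j f‖ ^ p ≤ ∑ j ∈ t, w f j)
    (hwK : ∀ f (t : Finset ι), ∑ j ∈ t, w f j ≤ (K * ‖f‖) ^ p) :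
    ∃ S : E →L[𝕜] F, (∀ f, HasSum (fun j => T j f) (S f)) ∧ ‖S‖ ≤ K := by
  have hT : ∀ f, Summable fun j => T j f := fun f =>
    summable_of_norm_sum_rpow_le hp (h f) (hwK f)
  have hlim : Filter.Tendsto (fun (t : Finset ι) f => (∑ j ∈ t, T j) f) Filter.atTop
      (nhds fun f => ∑' j, T j f) := by
    simp only [tendsto_pi_nhds, _root_.sum_apply]
    exact fun f => (hT f).hasSum
  refine ⟨continuousLinearMapOfTendsto _ hlim, fun f => (hT f).hasSum, ?_⟩
  refine ContinuousLinearMap.opNorm_le_bound _ hK fun f => ?_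
  have := norm_tsum_rpow_le_of_norm_sum_rpow_le hp.le (hT f) fun t => (h f t).trans (hwK f t)
  exact (Real.rpow_le_rpow_iff (norm_nonneg _) (by positivity) hp).1 this

end SeriesOfOperators

theorem stmt10_general {Ω : Type*} [MeasurableSpace Ω] (μ : Measure Ω)
    (p : ℝ≥0) [Fact (1 ≤ (p : ℝ≥0∞))] (N : ℕ)
    (a b : ℕ → Ω → ℝ)
    (ha01 : ∀ j x, a j x ∈ Set.Icc (0 : ℝ) 1) (hb01 : ∀ j x, b j x ∈ Set.Icc (0 : ℝ) 1)
    (haN : ∀ x, Set.encard {j | a j x ≠ 0} ≤ N)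
    (hbN : ∀ x, Set.encard {j | b j x ≠ 0} ≤ N)
    (A : ℕ → Lp ℝ (p : ℝ≥0∞) μ →L[ℝ] Lp ℝ (p : ℝ≥0∞) μ)
    (hbd : BddAbove (Set.range fun j => ‖A j‖))
    (Ma Mb : ℕ → Lp ℝ (p : ℝ≥0∞) μ →L[ℝ] Lp ℝ (p : ℝ≥0∞) μ)
    (hMa : ∀ j (f : Lp ℝ (p : ℝ≥0∞) μ), (Ma j f : Ω → ℝ) =ᵐ[μ] fun x => a j x * f x)
    (hMb : ∀ j (f : Lp ℝ (p : ℝ≥0∞) μ), (Mb j f : Ω → ℝ) =ᵐ[μ] fun x => b j x * f x) :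
    ∃ T : Lp ℝ (p : ℝ≥0∞) μ →L[ℝ] Lp ℝ (p : ℝ≥0∞) μ,
      (∀ f, HasSum (fun j => Ma j (A j (Mb j f))) (T f)) ∧
      ‖T‖ ≤ (N : ℝ) ^ 2 * ⨆ j, ‖A j‖ ∧
      ∀ f, ∑' j, ‖Ma j (A j (Mb j f))‖ ^ (p : ℝ)
        ≤ N * (⨆ j, ‖A j‖) ^ (p : ℝ) * ‖f‖ ^ (p : ℝ) := by
  have hp : 1 ≤ p := ENNReal.one_le_coe_iff.1 Fact.out
  have ha1 : ∀ j x, ‖a j x‖ ≤ 1 := fun j x =>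
    (Real.norm_of_nonneg (ha01 j x).1).trans_le (ha01 j x).2
  have hb1 : ∀ j x, ‖b j x‖ ≤ 1 := fun j x =>
    (Real.norm_of_nonneg (hb01 j x).1).trans_le (hb01 j x).2
  set C := ⨆ j, ‖A j‖
  have hC : 0 ≤ C := (norm_nonneg _).trans (le_ciSup hbd 0)
  have hinner : ∀ f t, ∑ j ∈ t, ‖A j (Mb j f)‖ ^ (p : ℝ) ≤ N * C ^ (p : ℝ) * ‖f‖ ^ (p : ℝ) :=
    fun f => Lp.sum_norm_rpow_apply_le_of_ae_eq_smul hbN hb1 hC (le_ciSup hbd) (hMb · f)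
  have hMa_le : ∀ j g, ‖Ma j g‖ ≤ ‖g‖ := fun j g => Lp.norm_le_of_ae_eq_smul (ha1 j) (hMa j g)
  set w := fun f j => (N : ℝ) ^ ((p : ℝ) - 1) * ‖A j (Mb j f)‖ ^ (p : ℝ)
  have houter : ∀ f t, ‖∑ j ∈ t, Ma j (A j (Mb j f))‖ ^ (p : ℝ) ≤ ∑ j ∈ t, w f j := fun f t =>
    (Lp.norm_sum_rpow_le_of_ae_eq_smul haN hp (hMa · _) t).trans <| by
      rw [Finset.mul_sum]
      exact Finset.sum_le_sum fun j _ =>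
        mul_le_mul_of_nonneg_left (by gcongr; exact hMa_le j _) (by positivity)
  have hwK : ∀ f t, ∑ j ∈ t, w f j ≤ (N * C * ‖f‖) ^ (p : ℝ) := fun f t =>
    calc ∑ j ∈ t, w f j ≤ (N : ℝ) ^ ((p : ℝ) - 1) * (N * C ^ (p : ℝ) * ‖f‖ ^ (p : ℝ)) := by
          rw [← Finset.mul_sum]
          gcongr
          exact hinner f t
      _ = (N * C * ‖f‖) ^ (p : ℝ) := by
          rw [Real.mul_rpow (by positivity) (norm_nonneg _), Real.mul_rpow (by positivity) hC,
            ← mul_assoc, ← mul_assoc, ← Real.rpow_add_one' (by positivity)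
              (by rw [sub_add_cancel]; positivity), sub_add_cancel]
  obtain ⟨T, hT, hTK⟩ := ContinuousLinearMap.exists_hasSum_apply_and_opNorm_le
    (fun j => Ma j ∘L A j ∘L Mb j) (by positivity) (by positivity) w houter hwK
  refine ⟨T, hT, hTK.trans (by gcongr; exact_mod_cast Nat.le_self_pow two_ne_zero N), fun f => ?_⟩
  refine Real.tsum_le_of_sum_le (fun j => by positivity) fun t => (hinner f t).trans' ?_
  gcongr with j
  exact hMa_le j _

/-- Lemma 4.2: let `(A j)` be uniformly bounded operators on `L^p(Ω,μ)` and let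
`Ma j`, `Mb j` be the multiplication operators by functions `a j, b j : Ω → [0,1]`
whose supports have covering multiplicity at most `N`.  Then
`∑_j Ma j ∘ A j ∘ Mb j` converges strongly to an operator `T` with
`‖T‖ ≤ N² sup_j ‖A j‖`, and moreover
`∑_j ‖Ma j (A j (Mb j f))‖^p ≤ N (sup_j ‖A j‖)^p ‖f‖^p` for every `f ∈ L^p`. -/
theorem stmt10 {Ω : Type*} [MeasurableSpace Ω] (μ : Measure Ω)
    (p : ℝ≥0) (hp : 1 ≤ p) [Fact (1 ≤ (p : ℝ≥0∞))] (N : ℕ)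
    (a b : ℕ → Ω → ℝ)
    (ha01 : ∀ j x, a j x ∈ Set.Icc (0 : ℝ) 1) (hb01 : ∀ j x, b j x ∈ Set.Icc (0 : ℝ) 1)
    (haN : ∀ x, Set.encard {j | a j x ≠ 0} ≤ N)
    (hbN : ∀ x, Set.encard {j | b j x ≠ 0} ≤ N)
    (A : ℕ → Lp ℝ (p : ℝ≥0∞) μ →L[ℝ] Lp ℝ (p : ℝ≥0∞) μ)
    (hbd : BddAbove (Set.range fun j => ‖A j‖))
    (Ma Mb : ℕ → Lp ℝ (p : ℝ≥0∞) μ →L[ℝ] Lp ℝ (p : ℝ≥0∞) μ)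
    (hMa : ∀ j (f : Lp ℝ (p : ℝ≥0∞) μ), (Ma j f : Ω → ℝ) =ᵐ[μ] fun x => a j x * f x)
    (hMb : ∀ j (f : Lp ℝ (p : ℝ≥0∞) μ), (Mb j f : Ω → ℝ) =ᵐ[μ] fun x => b j x * f x) :
    ∃ T : Lp ℝ (p : ℝ≥0∞) μ →L[ℝ] Lp ℝ (p : ℝ≥0∞) μ,
      (∀ f, HasSum (fun j => Ma j (A j (Mb j f))) (T f)) ∧
      ‖T‖ ≤ (N : ℝ) ^ 2 * ⨆ j, ‖A j‖ ∧
      ∀ f, ∑' j, ‖Ma j (A j (Mb j f))‖ ^ (p : ℝ)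
        ≤ N * (⨆ j, ‖A j‖) ^ (p : ℝ) * ‖f‖ ^ (p : ℝ) :=
  stmt10_general μ p N a b ha01 hb01 haN hbN A hbd Ma Mb hMa hMb
end

section
/- Let f : 𝔹ⁿ → ℂ be bounded continuous with vanishing oscillation at the boundary, i.e., Osc_z(f) := sup{|f(z)−f(w)| : β(z,w) ≤ 1} → 0 as |z| → 1, where β is the Bergman (hyperbolic) metric. If (z_γ) is a net in 𝔹ⁿ with |z_γ| → 1 and f(z_γ) → λ ∈ ℂ, then f ∘ φ_{z_γ} converges to the constant function λ uniformly on compact subsets of 𝔹ⁿ. -/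
open Filter MeasureTheory

noncomputable section

abbrev Cn (n : ℕ) := EuclideanSpace ℂ (Fin n)

open Classical in
/-- The Möbius involution `φ_z` of the unit ball interchanging `0` and `z`. -/
def mobius {n : ℕ} (z w : Cn n) : Cn n :=
  if z = 0 then -w else
    (1 - (inner ℂ z w : ℂ))⁻¹ •
      (z - ((inner ℂ z w : ℂ) / (inner ℂ z z : ℂ)) • z
        - ((Real.sqrt (1 - ‖z‖ ^ 2) : ℝ) : ℂ) • (w - ((inner ℂ z w : ℂ) / (inner ℂ z z : ℂ)) • z))

/-- The inverse hyperbolic tangent. -/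
def artanh (x : ℝ) : ℝ := (1 / 2) * Real.log ((1 + x) / (1 - x))

/-- The Bergman (hyperbolic) metric of the unit ball: `β(z,w) = artanh |φ_z(w)|`. -/
def bergmanMetric {n : ℕ} (z w : Cn n) : ℝ := artanh ‖mobius z w‖

/-- The oscillation `Osc_z(f) = sup{|f(z) − f(w)| : β(z,w) ≤ 1}` (over `w ∈ 𝔹ⁿ`). -/
def Osc {n : ℕ} (f : Cn n → ℂ) (z : Cn n) : ℝ :=
  sSup {r : ℝ | ∃ w : Cn n, ‖w‖ < 1 ∧ bergmanMetric z w ≤ 1 ∧ r = ‖f z - f w‖}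

open scoped InnerProductSpace

/-!
The Möbius maps `φ_z` are isometries of `β`, and `φ_z(0) = z`. Given `r < 1` there is an `m`,
depending only on `r`, such that for `|w| ≤ r` the points `(k/m) w`, `k = 0, …, m`, are
consecutively at Bergman distance at most `1`; hence so are their images `φ_z((k/m) w)`, a
chain from `z` to `φ_z(w)`. Since `(1 - |φ_z(a)|²)(1 - r)² ≤ 1 - |z|²` for `|a| ≤ r`, the whole
chain tends to the sphere uniformly as `|z| → 1`, where `Osc f` is small, so
`|f(φ_z(w)) - f(z)| ≤ m · sup Osc f → 0`.
-/

lemma one_sub_norm_sq_pos {E : Type*} [SeminormedAddCommGroup E] {a : E} (ha : ‖a‖ < 1) :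
    0 < 1 - ‖a‖ ^ 2 :=
  sub_pos.mpr (pow_lt_one₀ (norm_nonneg a) ha two_ne_zero)

section InnerProductSpace

variable {E : Type*} [NormedAddCommGroup E] [InnerProductSpace ℂ E]

lemma one_sub_inner_ne_zero {a b : E} (ha : ‖a‖ < 1) (hb : ‖b‖ < 1) : 1 - ⟪a, b⟫_ℂ ≠ 0 := by
  intro h
  have hab : ‖⟪a, b⟫_ℂ‖ < 1 := (norm_inner_le_norm a b).trans_lt <| by
    nlinarith [norm_nonneg a, norm_nonneg b]
  rw [← sub_eq_zero.mp h, norm_one] at hab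
  exact hab.false

lemma inner_self_eq_ofReal (a : E) : ⟪a, a⟫_ℂ = ((‖a‖ ^ 2 : ℝ) : ℂ) := by
  exact_mod_cast inner_self_eq_norm_sq_to_K a

lemma conj_one_sub_inner (a b : E) : starRingEnd ℂ (1 - ⟪a, b⟫_ℂ) = 1 - ⟪b, a⟫_ℂ := by
  simp

lemma norm_one_sub_inner_comm (a b : E) : ‖1 - ⟪a, b⟫_ℂ‖ = ‖1 - ⟪b, a⟫_ℂ‖ := by
  rw [← conj_one_sub_inner, RCLike.norm_conj]

lemma one_sub_inner_mul_one_sub_inner (a b : E) :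
    (1 - ⟪a, b⟫_ℂ) * (1 - ⟪b, a⟫_ℂ) = ((‖1 - ⟪b, a⟫_ℂ‖ ^ 2 : ℝ) : ℂ) := by
  rw [← conj_one_sub_inner b a, Complex.conj_mul']
  push_cast; rfl

lemma norm_ofReal_smul (t : ℝ) (w : E) : ‖(t : ℂ) • w‖ = |t| * ‖w‖ := by
  rw [norm_smul, Complex.norm_real, Real.norm_eq_abs]

end InnerProductSpace

section Mobius

variable {n : ℕ}

lemma one_sub_inner_mobius {z a b : Cn n} (hz : ‖z‖ < 1) (ha : ‖a‖ < 1) (hb : ‖b‖ < 1) :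
    1 - ⟪mobius z a, mobius z b⟫_ℂ =
      (1 - ⟪z, z⟫_ℂ) * (1 - ⟪a, b⟫_ℂ) / ((1 - ⟪a, z⟫_ℂ) * (1 - ⟪z, b⟫_ℂ)) := by
  rcases eq_or_ne z 0 with rfl | hz0
  · simp [mobius]
  have hs : ((Real.sqrt (1 - ‖z‖ ^ 2) : ℝ) : ℂ) ^ 2 = 1 - ⟪z, z⟫_ℂ := by
    rw [inner_self_eq_ofReal, ← Complex.ofReal_pow, Real.sq_sqrt (one_sub_norm_sq_pos hz).le]
    push_cast; ring
  have hzz : ⟪z, z⟫_ℂ ≠ 0 := inner_self_ne_zero.mpr hz0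
  have hza := one_sub_inner_ne_zero hz ha
  have haz := one_sub_inner_ne_zero ha hz
  have hzb := one_sub_inner_ne_zero hz hb
  simp only [mobius, if_neg hz0, inner_smul_left, inner_smul_right, inner_sub_left,
    inner_sub_right, map_div₀, map_inv₀, map_sub, map_one, inner_conj_symm, Complex.conj_ofReal]
  field_simp
  linear_combination (⟪a, z⟫_ℂ * ⟪z, b⟫_ℂ - ⟪z, z⟫_ℂ * ⟪a, b⟫_ℂ) * hs

lemma one_sub_norm_mobius_sq {z a : Cn n} (hz : ‖z‖ < 1) (ha : ‖a‖ < 1) :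
    1 - ‖mobius z a‖ ^ 2 = (1 - ‖z‖ ^ 2) * (1 - ‖a‖ ^ 2) / ‖1 - ⟪z, a⟫_ℂ‖ ^ 2 := by
  have h := one_sub_inner_mobius hz ha ha
  rw [one_sub_inner_mul_one_sub_inner, inner_self_eq_ofReal, inner_self_eq_ofReal,
    inner_self_eq_ofReal] at h
  exact_mod_cast h

lemma norm_mobius_lt_one {z a : Cn n} (hz : ‖z‖ < 1) (ha : ‖a‖ < 1) :
    ‖mobius z a‖ < 1 := by
  have : 0 < 1 - ‖mobius z a‖ ^ 2 := by
    have := norm_pos_iff.mpr (one_sub_inner_ne_zero hz ha)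
    have := one_sub_norm_sq_pos hz
    have := one_sub_norm_sq_pos ha
    rw [one_sub_norm_mobius_sq hz ha]
    positivity
  nlinarith [norm_nonneg (mobius z a)]

lemma norm_one_sub_inner_mobius {z a b : Cn n} (hz : ‖z‖ < 1) (ha : ‖a‖ < 1)
    (hb : ‖b‖ < 1) : ‖1 - ⟪mobius z a, mobius z b⟫_ℂ‖ =
      (1 - ‖z‖ ^ 2) * ‖1 - ⟪a, b⟫_ℂ‖ / (‖1 - ⟪z, a⟫_ℂ‖ * ‖1 - ⟪z, b⟫_ℂ‖) := by
  rw [one_sub_inner_mobius hz ha hb, norm_div, norm_mul, norm_mul, inner_self_eq_ofReal,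
    norm_one_sub_inner_comm a z]
  norm_cast
  rw [Real.norm_of_nonneg (one_sub_norm_sq_pos hz).le]

lemma norm_mobius_mobius {z a b : Cn n} (hz : ‖z‖ < 1) (ha : ‖a‖ < 1) (hb : ‖b‖ < 1) :
    ‖mobius (mobius z a) (mobius z b)‖ = ‖mobius a b‖ := by
  have hA := norm_mobius_lt_one hz ha
  have hB := norm_mobius_lt_one hz hb
  have hsq : 1 - ‖mobius (mobius z a) (mobius z b)‖ ^ 2 = 1 - ‖mobius a b‖ ^ 2 := by
    rw [one_sub_norm_mobius_sq hA hB, one_sub_norm_mobius_sq hz ha, one_sub_norm_mobius_sq hz hb,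
      norm_one_sub_inner_mobius hz ha hb, one_sub_norm_mobius_sq ha hb]
    have := norm_pos_iff.mpr (one_sub_inner_ne_zero hz ha)
    have := norm_pos_iff.mpr (one_sub_inner_ne_zero hz hb)
    have := norm_pos_iff.mpr (one_sub_inner_ne_zero ha hb)
    have := (one_sub_norm_sq_pos hz).ne'
    field_simp
  have := norm_nonneg (mobius (mobius z a) (mobius z b))
  have := norm_nonneg (mobius a b)
  nlinarith

lemma bergmanMetric_mobius {z a b : Cn n} (hz : ‖z‖ < 1) (ha : ‖a‖ < 1) (hb : ‖b‖ < 1) :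
    bergmanMetric (mobius z a) (mobius z b) = bergmanMetric a b := by
  rw [bergmanMetric, bergmanMetric, norm_mobius_mobius hz ha hb]

lemma mobius_zero_right (z : Cn n) : mobius z 0 = z := by
  by_cases hz : z = 0 <;> simp [mobius, hz]

lemma norm_mobius_smul_smul {t t' : ℝ} {w : Cn n} (ht : |t| * ‖w‖ < 1)
    (ht' : |t'| * ‖w‖ < 1) :
    ‖mobius ((t : ℂ) • w) ((t' : ℂ) • w)‖ * (1 - t * t' * ‖w‖ ^ 2) = |t' - t| * ‖w‖ := by
  have h := one_sub_norm_mobius_sq (z := (t : ℂ) • w) (a := (t' : ℂ) • w)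
    (by rwa [norm_ofReal_smul]) (by rwa [norm_ofReal_smul])
  have hinner : ⟪(t : ℂ) • w, (t' : ℂ) • w⟫_ℂ = ((t * t' * ‖w‖ ^ 2 : ℝ) : ℂ) := by
    rw [inner_smul_left, inner_smul_right, Complex.conj_ofReal, inner_self_eq_ofReal]
    push_cast; ring
  have hpos : 0 < 1 - t * t' * ‖w‖ ^ 2 := by
    have : t * t' * ‖w‖ ^ 2 < 1 := calc
      t * t' * ‖w‖ ^ 2 ≤ |t * t'| * ‖w‖ ^ 2 := by gcongr; exact le_abs_self _
      _ = (|t| * ‖w‖) * (|t'| * ‖w‖) := by rw [abs_mul]; ring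
      _ < 1 := mul_lt_one_of_nonneg_of_lt_one_left (by positivity) ht ht'.le
    linarith
  rw [hinner, ← Complex.ofReal_one, ← Complex.ofReal_sub, Complex.norm_real,
    Real.norm_of_nonneg hpos.le, norm_ofReal_smul, norm_ofReal_smul,
    eq_div_iff (by positivity)] at h
  rw [← pow_left_inj₀ (by positivity) (by positivity) two_ne_zero]
  simp only [mul_pow, sq_abs] at h ⊢
  linear_combination -h

lemma artanh_le_one {x : ℝ} (h0 : 0 ≤ x) (h : x ≤ 1 / 2) : artanh x ≤ 1 := by
  have hpos : 0 < (1 + x) / (1 - x) := div_pos (by linarith) (by linarith)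
  have hle : (1 + x) / (1 - x) ≤ 3 := by rw [div_le_iff₀ (by linarith)]; linarith
  have := Real.log_le_sub_one_of_pos hpos
  rw [artanh]
  linarith

lemma bergmanMetric_smul_le_one {w : Cn n} {r t t' : ℝ} (hw : ‖w‖ ≤ r) (hr : r < 1)
    (ht : 0 ≤ t) (htt' : t ≤ t') (ht' : t' ≤ 1) (hstep : 2 * (t' - t) * r ≤ 1 - r ^ 2) :
    bergmanMetric ((t : ℂ) • w) ((t' : ℂ) • w) ≤ 1 := by
  have hw0 := norm_nonneg w
  have h := norm_mobius_smul_smul (t := t) (t' := t') (w := w)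
    (by rw [abs_of_nonneg ht]; nlinarith) (by rw [abs_of_nonneg (ht.trans htt')]; nlinarith)
  rw [abs_of_nonneg (sub_nonneg.mpr htt')] at h
  have hx := norm_nonneg (mobius ((t : ℂ) • w) ((t' : ℂ) • w))
  have hdenom : 1 - r ^ 2 ≤ 1 - t * t' * ‖w‖ ^ 2 := by
    have : t * t' ≤ 1 := by nlinarith
    nlinarith [mul_le_mul this (pow_le_pow_left₀ hw0 hw 2) (sq_nonneg _) zero_le_one]
  have hr2 : 0 < 1 - r ^ 2 := by nlinarith
  refine artanh_le_one hx (le_of_mul_le_mul_right ?_ hr2)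
  nlinarith [mul_le_mul_of_nonneg_left hdenom hx,
    mul_le_mul_of_nonneg_left hw (sub_nonneg.mpr htt')]

lemma one_sub_norm_mobius_sq_mul_le {z a : Cn n} {r : ℝ} (hz : ‖z‖ < 1) (ha : ‖a‖ ≤ r)
    (hr : r < 1) : (1 - ‖mobius z a‖ ^ 2) * (1 - r) ^ 2 ≤ 1 - ‖z‖ ^ 2 := by
  have ha1 := ha.trans_lt hr
  have hlow : 1 - r ≤ ‖1 - ⟪z, a⟫_ℂ‖ := by
    have := norm_sub_norm_le (1 : ℂ) ⟪z, a⟫_ℂ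
    have := norm_inner_le_norm (𝕜 := ℂ) z a
    rw [norm_one] at *
    nlinarith [norm_nonneg z, norm_nonneg a]
  have hz2 := (one_sub_norm_sq_pos hz).le
  rw [one_sub_norm_mobius_sq hz ha1, div_mul_eq_mul_div,
    div_le_iff₀ (by have := norm_pos_iff.mpr (one_sub_inner_ne_zero hz ha1); positivity)]
  calc (1 - ‖z‖ ^ 2) * (1 - ‖a‖ ^ 2) * (1 - r) ^ 2
      ≤ (1 - ‖z‖ ^ 2) * 1 * ‖1 - ⟪z, a⟫_ℂ‖ ^ 2 := by
        gcongr
        exact sub_le_self _ (sq_nonneg _)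
    _ = (1 - ‖z‖ ^ 2) * ‖1 - ⟪z, a⟫_ℂ‖ ^ 2 := by ring

lemma eventually_lt_norm_mobius {ι : Type*} {l : Filter ι} {z : ι → Cn n}
    (hz : ∀ γ, ‖z γ‖ < 1) (hz1 : Tendsto (fun γ => ‖z γ‖) l (nhds 1)) {r δ : ℝ} (hr : r < 1)
    (hδ : δ < 1) : ∀ᶠ γ in l, ∀ a : Cn n, ‖a‖ ≤ r → δ < ‖mobius (z γ) a‖ := by
  set δ₀ := max δ 0
  have hδ₀ : δ₀ < 1 := max_lt hδ one_pos
  have hgap : 0 < (1 - δ₀ ^ 2) * (1 - r) ^ 2 :=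
    mul_pos (by nlinarith [le_max_right δ 0]) (by nlinarith)
  have hlim : Tendsto (fun γ => 1 - ‖z γ‖ ^ 2) l (nhds 0) := by
    simpa using (hz1.pow 2).const_sub 1
  filter_upwards [(tendsto_order.mp hlim).2 _ hgap] with γ hγ a ha
  have h := one_sub_norm_mobius_sq_mul_le (hz γ) ha hr
  have : δ₀ ^ 2 < ‖mobius (z γ) a‖ ^ 2 := by
    nlinarith [lt_of_mul_lt_mul_right (h.trans_lt hγ) (sq_nonneg (1 - r))]
  exact (le_max_left δ 0).trans_lt (lt_of_pow_lt_pow_left₀ 2 (norm_nonneg _) this)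

lemma dist_le_Osc {f : Cn n → ℂ} {M : ℝ} (hM : ∀ w : Cn n, ‖w‖ < 1 → ‖f w‖ ≤ M)
    {u v : Cn n} (hu : ‖u‖ < 1) (hv : ‖v‖ < 1) (huv : bergmanMetric u v ≤ 1) :
    dist (f u) (f v) ≤ Osc f u := by
  refine le_csSup ⟨2 * M, ?_⟩ ⟨v, hv, huv, dist_eq_norm _ _⟩
  rintro _ ⟨w, hw, -, rfl⟩
  linarith [norm_sub_le (f u) (f w), hM u hu, hM w hw]

lemma dist_le_mul_of_Osc_le {f : Cn n → ℂ} {M : ℝ}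
    (hM : ∀ w : Cn n, ‖w‖ < 1 → ‖f w‖ ≤ M) {z w : Cn n} {r ε : ℝ} {m : ℕ} (hz : ‖z‖ < 1)
    (hw : ‖w‖ ≤ r) (hr : r < 1) (hm : 2 * r < m * (1 - r ^ 2))
    (hOsc : ∀ a : Cn n, ‖a‖ ≤ r → Osc f (mobius z a) ≤ ε) :
    dist (f z) (f (mobius z w)) ≤ m * ε := by
  have hr0 : 0 ≤ r := (norm_nonneg w).trans hw
  have hm0 : (0 : ℝ) < m := by
    by_contra! h
    nlinarith [mul_nonpos_of_nonpos_of_nonneg h (by nlinarith : (0 : ℝ) ≤ 1 - r ^ 2)]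
  set p : ℕ → Cn n := fun k => (((k / m : ℝ)) : ℂ) • w
  have hp : ∀ k ≤ m, ‖p k‖ ≤ r := fun k hk => by
    have : (k : ℝ) / m ≤ 1 := (div_le_one hm0).mpr (by exact_mod_cast hk)
    rw [norm_ofReal_smul, abs_of_nonneg (by positivity)]
    nlinarith [norm_nonneg w]
  have hstep : ∀ k < m, bergmanMetric (mobius z (p k)) (mobius z (p (k + 1))) ≤ 1 := by
    intro k hk
    rw [bergmanMetric_mobius hz ((hp k hk.le).trans_lt hr) ((hp (k + 1) hk).trans_lt hr)]
    refine bergmanMetric_smul_le_one hw hr (by positivity) (by gcongr; simp) ?_ ?_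
    · exact (div_le_one hm0).mpr (by exact_mod_cast hk)
    · rw [← sub_div, Nat.cast_succ, add_sub_cancel_left, show 2 * (1 / (m : ℝ)) * r = 2 * r / m by
        ring, div_le_iff₀ hm0]
      linarith
  calc dist (f z) (f (mobius z w)) = dist (f (mobius z (p 0))) (f (mobius z (p m))) := by
        simp [p, mobius_zero_right, (Nat.cast_pos.mp hm0).ne']
    _ ≤ ∑ k ∈ Finset.range m, dist (f (mobius z (p k))) (f (mobius z (p (k + 1)))) :=
        dist_le_range_sum_dist (fun k => f (mobius z (p k))) m
    _ ≤ ∑ _k ∈ Finset.range m, ε := Finset.sum_le_sum fun k hk => by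
        have hk := Finset.mem_range.mp hk
        exact (dist_le_Osc hM (norm_mobius_lt_one hz ((hp k hk.le).trans_lt hr))
          (norm_mobius_lt_one hz ((hp (k + 1) hk).trans_lt hr)) (hstep k hk)).trans
          (hOsc _ (hp k hk.le))
    _ = m * ε := by simp

end Mobius

theorem stmt19_general {n : ℕ} {ι : Type*} (f : Cn n → ℂ)
    (hf_bdd : ∃ M : ℝ, ∀ w : Cn n, ‖w‖ < 1 → ‖f w‖ ≤ M)
    (hVO : ∀ ε > (0 : ℝ), ∃ δ : ℝ, δ < 1 ∧
      ∀ z : Cn n, ‖z‖ < 1 → δ < ‖z‖ → Osc f z < ε)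
    (l : Filter ι) (z : ι → Cn n) (hzb : ∀ γ, ‖z γ‖ < 1)
    (hz1 : Tendsto (fun γ => ‖z γ‖) l (nhds 1))
    (lam : ℂ) (hlam : Tendsto (fun γ => f (z γ)) l (nhds lam)) :
    ∀ K ⊆ Metric.ball (0 : Cn n) 1, IsCompact K →
      TendstoUniformlyOn (fun γ w => f (mobius (z γ) w)) (fun _ => lam) l K := by
  intro K hK hKc
  obtain ⟨M, hM⟩ := hf_bdd
  obtain ⟨r₀, hr₀, hKr₀⟩ := exists_lt_subset_ball hKc.isClosed hK
  set r := max r₀ 0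
  have hr : r < 1 := max_lt hr₀ one_pos
  have hKr : K ⊆ Metric.ball 0 r := hKr₀.trans (Metric.ball_subset_ball (le_max_left _ _))
  obtain ⟨m, hm⟩ : ∃ m : ℕ, 2 * r < m * (1 - r ^ 2) := by
    obtain ⟨m, hm⟩ := exists_nat_gt (2 * r / (1 - r ^ 2))
    exact ⟨m, (div_lt_iff₀ (by nlinarith [le_max_right r₀ 0])).mp hm⟩
  rw [Metric.tendstoUniformlyOn_iff]
  intro ε hε
  obtain ⟨δ, hδ, hOsc⟩ := hVO (ε / (2 * (m + 1))) (by positivity)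
  filter_upwards [eventually_lt_norm_mobius hzb hz1 hr hδ,
    Metric.tendsto_nhds.mp hlam (ε / 2) (half_pos hε)] with γ hfar hclose w hw
  have hchain := dist_le_mul_of_Osc_le hM (hzb γ) (mem_ball_zero_iff.mp (hKr hw)).le hr hm
    fun a ha => (hOsc _ (norm_mobius_lt_one (hzb γ) (ha.trans_lt hr)) (hfar a ha)).le
  have hmε : (m : ℝ) * (ε / (2 * (m + 1))) ≤ ε / 2 := by
    rw [mul_div_assoc', div_le_div_iff₀ (by positivity) two_pos]
    nlinarith
  calc dist lam (f (mobius (z γ) w))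
      ≤ dist (f (z γ)) lam + dist (f (z γ)) (f (mobius (z γ) w)) := dist_triangle_left _ _ _
    _ < ε := by linarith

/-- Key step in Proposition 7.1: if `f` is bounded continuous on `𝔹ⁿ` with
vanishing oscillation at the boundary and `(z γ)` is a net in `𝔹ⁿ` with
`|z γ| → 1` and `f(z γ) → λ`, then `f ∘ φ_{z γ} → λ` uniformly on compact
subsets of `𝔹ⁿ`. -/
theorem stmt19 {n : ℕ} {ι : Type*} (f : Cn n → ℂ)
    (hf_cont : ContinuousOn f (Metric.ball (0 : Cn n) 1))
    (hf_bdd : ∃ M : ℝ, ∀ w : Cn n, ‖w‖ < 1 → ‖f w‖ ≤ M)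
    (hVO : ∀ ε > (0 : ℝ), ∃ δ : ℝ, δ < 1 ∧
      ∀ z : Cn n, ‖z‖ < 1 → δ < ‖z‖ → Osc f z < ε)
    (l : Filter ι) [l.NeBot] (z : ι → Cn n) (hzb : ∀ γ, ‖z γ‖ < 1)
    (hz1 : Tendsto (fun γ => ‖z γ‖) l (nhds 1))
    (lam : ℂ) (hlam : Tendsto (fun γ => f (z γ)) l (nhds lam)) :
    ∀ K ⊆ Metric.ball (0 : Cn n) 1, IsCompact K →
      TendstoUniformlyOn (fun γ w => f (mobius (z γ) w)) (fun _ => lam) l K :=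
  stmt19_general f hf_bdd hVO l z hzb hz1 lam hlam

end
end
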